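/- arXiv:2504.05151 — 4 statements merged into one kernel-verified Lean document; each statement's English description precedes it below -/
import Mathlib

section
/- Let $H \in \mathbb{C}^{js \times js}$ be block upper Hessenberg with invertible subdiagonal blocks $\Gamma_2,\ldots,\Gamma_j$, and let $M \in \mathbb{C}^{s\times s}$ be invertible. Then for every nonzero $P_j \in \mathbb{C}^{s\times s}$ there exists a unique matrix polynomial $P(\lambda) = \sum_{i=0}^{j} \lambda^i P_i$ of degree $j$ with leading coefficient $P_j$ such that $P(H) \circ (E_1 M) := \sum_{i=0}^{j} H^i E_1 M P_i = 0$; moreover there exist matrices $\Theta_0,\ldots,\Theta_{j-1} \in \mathbb{C}^{s\times s}$, independent of $P_j$, such that $P_i = \Theta_i P_j$ for all $i < j$. -/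
open Matrix Polynomial

abbrev Mat (s : ℕ) := Matrix (Fin s) (Fin s) ℂ

/-- The `(p,q)` block (of size `s × s`) of a `js × js` block matrix. -/
def blk {j s : ℕ} (H : Matrix (Fin j × Fin s) (Fin j × Fin s) ℂ) (p q : Fin j) :
    Mat s := Matrix.of fun a b => H (p, a) (q, b)

/-- The `i`-th block canonical vector `E_i = e_i ⊗ I_s`. -/
def blkE {j s : ℕ} (i : Fin j) : Matrix (Fin j × Fin s) (Fin s) ℂ :=
  Matrix.of fun pa b => if pa.1 = i ∧ pa.2 = b then 1 else 0

/-- Block upper Hessenberg: all blocks strictly below the first subdiagonal vanish. -/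
def BUH {j s : ℕ} (H : Matrix (Fin j × Fin s) (Fin j × Fin s) ℂ) : Prop :=
  ∀ p q : Fin j, (q : ℕ) + 1 < (p : ℕ) → blk H p q = 0

/-- The action `P(N) ∘ W := ∑ᵢ Nⁱ W Pᵢ` of a matrix polynomial on a block vector. -/
noncomputable def act {n : Type*} [Fintype n] [DecidableEq n] {s : ℕ}
    (P : Polynomial (Mat s)) (N : Matrix n n ℂ) (W : Matrix n (Fin s) ℂ) :
    Matrix n (Fin s) ℂ :=
  ∑ i ∈ Finset.range (P.natDegree + 1), (N ^ i) * W * P.coeff i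

/-- Evaluation of a matrix polynomial at a scalar: `P(z) = ∑ᵢ zⁱ Pᵢ`. -/
noncomputable def evalS {s : ℕ} (P : Polynomial (Mat s)) (z : ℂ) : Mat s :=
  ∑ i ∈ Finset.range (P.natDegree + 1), z ^ i • P.coeff i

/-- The subdiagonal block `Γ_i = H_{(i-1)(i-2)}` (paper indexing, `2 ≤ i ≤ j`),
with the convention `Γ_i = I` out of range (in particular `Γ₁ = I`). -/
noncomputable def Gam {j s : ℕ} (H : Matrix (Fin j × Fin s) (Fin j × Fin s) ℂ)
    (i : ℕ) : Mat s :=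
  if h : 2 ≤ i ∧ i ≤ j then blk H ⟨i - 1, by omega⟩ ⟨i - 2, by omega⟩ else 1
/-!
For `W = E₁ M`, the block Krylov matrix `K = [W, HW, …, H^(j-1) W]` is block upper triangular
because `H` is block upper Hessenberg, and its `k`-th diagonal block is `Γ_{k+1} ⋯ Γ₂ M`; hence `K`
is invertible. Since `P(H) ∘ W = K [P₀; …; P_{j-1}] + H^j W P_j`, the equation `P(H) ∘ W = 0`
forces `[P₀; …; P_{j-1}] = -K⁻¹ H^j W P_j`, so `Θᵢ` is the `i`-th block of `-K⁻¹ H^j W`.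
-/

section BlockKrylov

variable {j s : ℕ} {H : Matrix (Fin j × Fin s) (Fin j × Fin s) ℂ}
  {W : Matrix (Fin j × Fin s) (Fin s) ℂ}

def blkRow (V : Matrix (Fin j × Fin s) (Fin s) ℂ) (p : Fin j) : Mat s :=
  Matrix.of fun a c => V (p, a) c

def krylov (H : Matrix (Fin j × Fin s) (Fin j × Fin s) ℂ)
    (W : Matrix (Fin j × Fin s) (Fin s) ℂ) : Matrix (Fin j × Fin s) (Fin j × Fin s) ℂ :=
  Matrix.of fun pa qb => (H ^ (qb.1 : ℕ) * W) pa qb.2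

def coeffStack (j : ℕ) (P : Polynomial (Mat s)) : Matrix (Fin j × Fin s) (Fin s) ℂ :=
  Matrix.of fun qb c => P.coeff qb.1 qb.2 c

noncomputable def theta (H : Matrix (Fin j × Fin s) (Fin j × Fin s) ℂ)
    (W : Matrix (Fin j × Fin s) (Fin s) ℂ) (i : ℕ) : Mat s :=
  if h : i < j then blkRow (-((krylov H W)⁻¹ * (H ^ j * W))) ⟨i, h⟩ else 0

lemma BUH.apply_eq_zero (hH : BUH H) {p q : Fin j} (hpq : (q : ℕ) + 1 < p) (a b : Fin s) :
    H (p, a) (q, b) = 0 :=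
  congrFun₂ (hH p q hpq) a b

lemma BUH.pow_mul_apply_eq_zero (hH : BUH H)
    (hW : ∀ (p : Fin j) (a c : Fin s), (p : ℕ) ≠ 0 → W (p, a) c = 0) :
    ∀ (k : ℕ) (p : Fin j), k < p → ∀ a c, (H ^ k * W) (p, a) c = 0 := by
  intro k
  induction k with
  | zero => intro p hp a c; simpa using hW p a c hp.ne'
  | succ k ih =>
    intro p hp a c
    rw [pow_succ', Matrix.mul_assoc, Matrix.mul_apply, Fintype.sum_prod_type]
    refine Finset.sum_eq_zero fun q _ => Finset.sum_eq_zero fun b _ => ?_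
    rcases lt_or_ge k q with hkq | hqk
    · rw [ih q hkq, mul_zero]
    · rw [hH.apply_eq_zero (by omega), zero_mul]

lemma BUH.blkRow_pow_succ_mul (hH : BUH H)
    (hW : ∀ (p : Fin j) (a c : Fin s), (p : ℕ) ≠ 0 → W (p, a) c = 0) (k : ℕ) (hk : k + 1 < j) :
    blkRow (H ^ (k + 1) * W) ⟨k + 1, hk⟩ =
      blk H ⟨k + 1, hk⟩ ⟨k, Nat.lt_of_succ_lt hk⟩ *
        blkRow (H ^ k * W) ⟨k, Nat.lt_of_succ_lt hk⟩ := by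
  ext a c
  rw [blkRow, Matrix.of_apply, pow_succ', Matrix.mul_assoc, Matrix.mul_apply,
    Fintype.sum_prod_type, Finset.sum_eq_single ⟨k, by omega⟩]
  · rfl
  · intro q _ hq
    refine Finset.sum_eq_zero fun b _ => ?_
    rcases lt_or_gt_of_ne (Fin.val_ne_of_ne hq) with hqk | hkq
    · rw [hH.apply_eq_zero (Nat.succ_lt_succ hqk), zero_mul]
    · rw [hH.pow_mul_apply_eq_zero hW k q hkq, mul_zero]
  · exact fun h => absurd (Finset.mem_univ _) h

lemma BUH.isUnit_blkRow_pow_mul (hH : BUH H)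
    (hinv : ∀ (m : ℕ) (hm : m + 1 < j), IsUnit (blk H ⟨m + 1, hm⟩ ⟨m, Nat.lt_of_succ_lt hm⟩))
    (hW : ∀ (p : Fin j) (a c : Fin s), (p : ℕ) ≠ 0 → W (p, a) c = 0) (hj : 0 < j)
    (hW₀ : IsUnit (blkRow W ⟨0, hj⟩)) :
    ∀ (k : ℕ) (hk : k < j), IsUnit (blkRow (H ^ k * W) ⟨k, hk⟩) := by
  intro k
  induction k with
  | zero => intro _; simpa using hW₀
  | succ k ih =>
    intro hk
    rw [hH.blkRow_pow_succ_mul hW k hk]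
    exact (hinv k hk).mul (ih (by omega))

lemma BUH.blockTriangular_krylov (hH : BUH H)
    (hW : ∀ (p : Fin j) (a c : Fin s), (p : ℕ) ≠ 0 → W (p, a) c = 0) :
    (krylov H W).BlockTriangular Prod.fst :=
  fun _ _ h => hH.pow_mul_apply_eq_zero hW _ _ h _ _

lemma BUH.isUnit_krylov (hH : BUH H)
    (hinv : ∀ (m : ℕ) (hm : m + 1 < j), IsUnit (blk H ⟨m + 1, hm⟩ ⟨m, Nat.lt_of_succ_lt hm⟩))
    (hW : ∀ (p : Fin j) (a c : Fin s), (p : ℕ) ≠ 0 → W (p, a) c = 0) (hj : 0 < j)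
    (hW₀ : IsUnit (blkRow W ⟨0, hj⟩)) :
    IsUnit (krylov H W) := by
  rw [Matrix.isUnit_iff_isUnit_det, (hH.blockTriangular_krylov hW).det_fintype]
  refine IsUnit.prod_univ_iff.2 fun k => ?_
  let e : Fin s ≃ {x : Fin j × Fin s // x.1 = k} :=
    (Equiv.uniqueProd (Fin s) {p // p = k}).symm.trans Equiv.prodSubtypeFstEquivSubtypeProd.symm
  have hblock :
      ((krylov H W).toSquareBlock Prod.fst k).submatrix e e = blkRow (H ^ (k : ℕ) * W) k :=
    rfl
  rw [← Matrix.det_submatrix_equiv_self e, hblock, ← Matrix.isUnit_iff_isUnit_det]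
  exact hH.isUnit_blkRow_pow_mul hinv hW hj hW₀ k k.isLt

lemma act_eq_krylov_mul_coeffStack_add {P : Polynomial (Mat s)} (hP : P.natDegree = j) :
    act P H W = krylov H W * coeffStack j P + H ^ j * W * P.coeff j := by
  rw [act, hP, Finset.sum_range_succ]
  congr 1
  ext ⟨p, a⟩ c
  rw [Matrix.sum_apply, ← Fin.sum_univ_eq_sum_range, Matrix.mul_apply, Fintype.sum_prod_type]
  exact Finset.sum_congr rfl fun q _ => Matrix.mul_apply

lemma act_eq_zero_iff_coeffStack (hK : IsUnit (krylov H W)) {P : Polynomial (Mat s)}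
    (hP : P.natDegree = j) :
    act P H W = 0 ↔ coeffStack j P = -((krylov H W)⁻¹ * (H ^ j * W)) * P.coeff j := by
  have := hK.invertible
  have hrhs : -((krylov H W)⁻¹ * (H ^ j * W)) * P.coeff j =
      (krylov H W)⁻¹ * -(H ^ j * W * P.coeff j) := by
    rw [Matrix.neg_mul, Matrix.mul_neg, Matrix.mul_assoc]
  rw [act_eq_krylov_mul_coeffStack_add hP, add_eq_zero_iff_eq_neg, hrhs,
    eq_comm (a := coeffStack j P), Matrix.inv_mul_eq_iff_eq_mul_of_invertible, eq_comm]

lemma coeffStack_eq_mul_iff (P : Polynomial (Mat s)) (T : Matrix (Fin j × Fin s) (Fin s) ℂ)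
    (C : Mat s) :
    coeffStack j P = T * C ↔ ∀ (i : ℕ) (hi : i < j), P.coeff i = blkRow T ⟨i, hi⟩ * C := by
  constructor
  · intro h i hi
    ext a c
    exact congrFun₂ h (⟨i, hi⟩, a) c
  · intro h
    ext ⟨q, b⟩ c
    exact congrFun₂ (h q q.isLt) b c

lemma act_eq_zero_iff_coeff_eq_theta_mul (hK : IsUnit (krylov H W)) {P : Polynomial (Mat s)}
    (hP : P.natDegree = j) :
    act P H W = 0 ↔ ∀ i < j, P.coeff i = theta H W i * P.coeff j := by
  rw [act_eq_zero_iff_coeffStack hK hP, coeffStack_eq_mul_iff]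
  refine forall₂_congr fun i hi => ?_
  rw [theta, dif_pos hi]

end BlockKrylov

lemma blkE_mul_apply_of_ne {j s : ℕ} {i p : Fin j} (hp : p ≠ i) (M : Mat s) (a c : Fin s) :
    (blkE (s := s) i * M) (p, a) c = 0 := by
  show ∑ b, blkE i (p, a) b * M b c = 0
  simp [blkE, hp]

lemma blkRow_blkE_mul {j s : ℕ} (i : Fin j) (M : Mat s) : blkRow (blkE i * M) i = M := by
  ext a c
  show ∑ b, blkE i (i, a) b * M b c = M a c
  simp [blkE]

lemma Polynomial.exists_natDegree_eq_coeff_eq {R : Type*} [Semiring R] {n : ℕ} (c : ℕ → R)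
    (hc : c n ≠ 0) : ∃ P : R[X], P.natDegree = n ∧ ∀ i ≤ n, P.coeff i = c i := by
  set P : R[X] := ∑ i ∈ Finset.range (n + 1), monomial i (c i)
  have hcoeff : ∀ i, P.coeff i = if i ≤ n then c i else 0 := by
    intro i
    simp [P, Polynomial.finsetSum_coeff, Polynomial.coeff_monomial]
  refine ⟨P, le_antisymm ?_ ?_, fun i hi => by rw [hcoeff, if_pos hi]⟩
  · exact natDegree_le_iff_coeff_eq_zero.2 fun i hi => by
      rw [hcoeff, if_neg (by exact_mod_cast hi.not_ge)]
  · exact le_natDegree_of_ne_zero (by rwa [hcoeff, if_pos le_rfl])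

/-- existence and uniqueness of the block characteristic polynomial of a
block upper Hessenberg matrix with respect to `E₁ M`, for each nonzero leading
coefficient, together with the matrices `Θᵢ` independent of the leading coefficient. -/
theorem block_char_poly_unique {j s : ℕ} (hj : 0 < j)
    (H : Matrix (Fin j × Fin s) (Fin j × Fin s) ℂ) (hH : BUH H)
    (hinv : ∀ (m : ℕ) (hm : m + 1 < j),
      IsUnit (blk H ⟨m + 1, hm⟩ ⟨m, by omega⟩))
    (M : Mat s) (hM : IsUnit M) :
    ∃ Θ : ℕ → Mat s, ∀ Pj : Mat s, Pj ≠ 0 →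
      (∃! P : Polynomial (Mat s), P.natDegree = j ∧ P.leadingCoeff = Pj ∧
        act P H (blkE (⟨0, hj⟩ : Fin j) * M) = 0) ∧
      (∀ P : Polynomial (Mat s), P.natDegree = j → P.leadingCoeff = Pj →
        act P H (blkE (⟨0, hj⟩ : Fin j) * M) = 0 →
        ∀ i < j, P.coeff i = Θ i * Pj) := by
  set W : Matrix (Fin j × Fin s) (Fin s) ℂ := blkE (⟨0, hj⟩ : Fin j) * M
  have hK : IsUnit (krylov H W) := by
    refine hH.isUnit_krylov hinv (fun p a c hp => blkE_mul_apply_of_ne (Fin.ne_of_val_ne hp) M a c)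
      hj ?_
    rwa [blkRow_blkE_mul]
  refine ⟨theta H W, fun Pj hPj => ?_⟩
  have hsol : ∀ P : Polynomial (Mat s), P.natDegree = j → P.leadingCoeff = Pj →
      (act P H W = 0 ↔ ∀ i < j, P.coeff i = theta H W i * Pj) := by
    intro P hP hlc
    rw [← hlc, leadingCoeff, hP]
    exact act_eq_zero_iff_coeff_eq_theta_mul hK hP
  obtain ⟨P₀, hdeg, hcoeff⟩ :=
    exists_natDegree_eq_coeff_eq (n := j) (fun i => if i = j then Pj else theta H W i * Pj)
      (by simpa using hPj)
  have hlc : P₀.leadingCoeff = Pj := by rw [leadingCoeff, hdeg, hcoeff j le_rfl, if_pos rfl]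
  have hlow : ∀ i < j, P₀.coeff i = theta H W i * Pj := fun i hi => by
    rw [hcoeff i hi.le, if_neg hi.ne]
  refine ⟨⟨P₀, ⟨hdeg, hlc, (hsol P₀ hdeg hlc).2 hlow⟩, ?_⟩, fun P hP hlcP h => (hsol P hP hlcP).1 h⟩
  rintro Q ⟨hQ, hQlc, hQact⟩
  refine (ext_iff_natDegree_le hQ.le hdeg.le).2 fun i hi => ?_
  rcases hi.lt_or_eq with hi | rfl
  · rw [(hsol Q hQ hQlc).1 hQact i hi, hlow i hi]
  · rw [hcoeff _ le_rfl, if_pos rfl, ← hQlc, leadingCoeff, hQ]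
end

section
/- Let $H \in \mathbb{C}^{js\times js}$ be block upper Hessenberg with invertible subdiagonal blocks, and let $\Lambda(z)$ be its block characteristic polynomial with respect to $E_1$ with leading coefficient $\Gamma_2^{-1}\cdots\Gamma_j^{-1}$. Then $H$ is a linearization of the matrix polynomial $\Lambda(z)$: there exist matrix functions $G(\lambda)$, $F(\lambda)$, invertible at every eigenvalue of $H$, such that $G(\lambda)(\lambda I - H)F(\lambda)$ has the block anti-triangular form with $\Lambda(\lambda)$ in the top-right block and the invertible block diagonal $-\Gamma_2, \ldots, -\Gamma_j$ below; in particular $\det(\lambda I - H) = c \cdot \det \Lambda(\lambda)$ for a nonzero constant $c$. -/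
open Matrix Polynomial

/-!
Let `L` be the block subdiagonal `Γ₂, …, Γⱼ` of `H` and `S` the matrix carrying `Γ₂⁻¹, …, Γⱼ⁻¹`
on the block superdiagonal, so that `L S` and `S L` are the identity except in the first, resp.
last, diagonal block. Because `H` is block Hessenberg, `S (zI - H + L)` is strictly block upper
triangular, so `F = (1 - S (zI - H + L))⁻¹` has determinant one, and `L S L = L` makes every
block row of `(zI - H) F` but the first equal to that of `-L`. The last block column of `F` is the
Horner column `h = ∑ᵢ ∑_{k<i} zᵏ H^{i-1-k} E₁ Λᵢ`: indeed `(zI - H) h = E₁ Λ(z)` by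
`Λ(H) ∘ E₁ = 0`, and the last block of `h` is `Γⱼ ⋯ Γ₂ Λⱼ = I`. A unipotent row operation `G`
then clears the first block row except for `Λ(z)`, leaving `T(Λ(z))` with `T(A) = E₁ A Eⱼᵀ - L`.
Finally `T(A) = T(I) (1 + Eⱼ (A - I) Eⱼᵀ)`, so `det T(A) = det T(I) · det A` with `T(I)`
invertible.
-/

namespace BlockHessenberg

variable {m n s : ℕ}

lemma blk_ext {A B : Matrix (Fin m × Fin s) (Fin m × Fin s) ℂ}
    (h : ∀ p q, blk A p q = blk B p q) : A = B := by
  ext x y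
  exact congrFun (congrFun (h x.1 y.1) x.2) y.2

lemma blk_mul (A B : Matrix (Fin m × Fin s) (Fin m × Fin s) ℂ) (p q : Fin m) :
    blk (A * B) p q = ∑ r, blk A p r * blk B r q := by
  ext a b
  simp [blk, Matrix.mul_apply, Matrix.sum_apply, Fintype.sum_prod_type]

lemma blk_one (p q : Fin m) :
    blk (1 : Matrix (Fin m × Fin s) (Fin m × Fin s) ℂ) p q = if p = q then 1 else 0 := by
  ext a b
  by_cases h : p = q <;> simp [blk, Matrix.one_apply, h, Prod.ext_iff]

lemma blk_sub (A B : Matrix (Fin m × Fin s) (Fin m × Fin s) ℂ) (p q : Fin m) :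
    blk (A - B) p q = blk A p q - blk B p q := rfl

lemma blk_add (A B : Matrix (Fin m × Fin s) (Fin m × Fin s) ℂ) (p q : Fin m) :
    blk (A + B) p q = blk A p q + blk B p q := rfl

lemma blk_smul (z : ℂ) (A : Matrix (Fin m × Fin s) (Fin m × Fin s) ℂ) (p q : Fin m) :
    blk (z • A) p q = z • blk A p q := rfl

lemma transpose_blkE_mul_mul_blkE (A : Matrix (Fin m × Fin s) (Fin m × Fin s) ℂ) (p q : Fin m) :
    (blkE (s := s) p)ᵀ * A * blkE (s := s) q = blk A p q := by
  ext a b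
  simp [blk, blkE, Matrix.mul_apply, ite_and, Fintype.sum_prod_type]

lemma transpose_blkE_mul_blkE (p q : Fin m) :
    (blkE (s := s) p)ᵀ * blkE (s := s) q = if p = q then 1 else 0 := by
  simpa [blk_one] using
    transpose_blkE_mul_mul_blkE (1 : Matrix (Fin m × Fin s) (Fin m × Fin s) ℂ) p q

lemma mul_blkE_eq_zero {A : Matrix (Fin m × Fin s) (Fin m × Fin s) ℂ} {q : Fin m}
    (h : ∀ p, blk A p q = 0) : A * blkE (s := s) q = 0 := by
  ext x b
  have := congrFun (congrFun (h x.1) x.2) b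
  simpa [blk, blkE, Matrix.mul_apply, ite_and, Fintype.sum_prod_type] using this

lemma transpose_blkE_mul_eq_zero {A : Matrix (Fin m × Fin s) (Fin m × Fin s) ℂ} {p : Fin m}
    (h : ∀ q, blk A p q = 0) : (blkE (s := s) p)ᵀ * A = 0 := by
  ext a y
  have := congrFun (congrFun (h y.1) a) y.2
  simpa [blk, blkE, Matrix.mul_apply, ite_and, Fintype.sum_prod_type] using this

lemma blk_blkE_mul_mul_transpose (p q : Fin m) (X : Mat s) (a b : Fin m) :
    blk (blkE (s := s) p * X * (blkE (s := s) q)ᵀ) a b = if a = p ∧ b = q then X else 0 := by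
  ext c d
  by_cases ha : a = p <;> by_cases hb : b = q <;>
    simp [blk, blkE, Matrix.mul_apply, ha, hb, ite_and]

lemma blk_blkE_mul_transpose (p q a b : Fin m) :
    blk (blkE (s := s) p * (blkE (s := s) q)ᵀ) a b = if a = p ∧ b = q then 1 else 0 := by
  simpa using blk_blkE_mul_mul_transpose (s := s) p q 1 a b

lemma transpose_blkE_mul_smul_mul_blkE_mul (A : Matrix (Fin m × Fin s) (Fin m × Fin s) ℂ)
    (c : ℂ) (X : Mat s) (p q : Fin m) :
    (blkE (s := s) p)ᵀ * ((c • A) * blkE (s := s) q * X) = c • (blk A p q * X) := by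
  rw [← Matrix.mul_assoc, ← Matrix.mul_assoc, Matrix.mul_smul, Matrix.smul_mul, Matrix.smul_mul,
    transpose_blkE_mul_mul_blkE]

lemma sum_ite_eq_of_iff {M : Type*} [AddCommMonoid M] {P : Fin m → Prop}
    [DecidablePred P] {r : Fin m} (h : ∀ x, P x ↔ x = r) (f : Fin m → M) :
    ∑ x, (if P x then f x else 0) = f r := by
  rw [Fintype.sum_eq_single r fun x hx => if_neg (mt (h x).1 hx)]
  exact if_pos ((h r).2 rfl)

lemma det_one_sub_eq_one {N : Matrix (Fin m × Fin s) (Fin m × Fin s) ℂ}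
    (hN : ∀ p q, q ≤ p → blk N p q = 0) : (1 - N).det = 1 := by
  have hN' : ∀ x y : Fin m × Fin s, y.1 ≤ x.1 → N x y = 0 := fun x y h =>
    congrFun (congrFun (hN x.1 y.1 h) x.2) y.2
  have htri : (1 - N).BlockTriangular Prod.fst := fun x y h => by
    rw [Matrix.sub_apply, Matrix.one_apply_ne (fun e => (e ▸ h).false), hN' x y h.le, sub_zero]
  rw [htri.det]
  refine Finset.prod_eq_one fun k _ => ?_
  have hblock : (1 - N).toSquareBlock Prod.fst k = 1 := by
    ext ⟨x, hx⟩ ⟨y, hy⟩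
    simp [Matrix.toSquareBlock_def, hN' x y (hy.trans hx.symm).le, Matrix.one_apply]
  rw [hblock, Matrix.det_one]

lemma Gam_eq_blk (H : Matrix (Fin m × Fin s) (Fin m × Fin s) ℂ) {p q : Fin m}
    (h : (p : ℕ) = q + 1) : Gam H (q + 2) = blk H p q := by
  rw [show p = ⟨q + 1, by omega⟩ from Fin.ext h, Gam, dif_pos ⟨by omega, by omega⟩]
  rfl

def subdiag (H : Matrix (Fin m × Fin s) (Fin m × Fin s) ℂ) :
    Matrix (Fin m × Fin s) (Fin m × Fin s) ℂ :=
  Matrix.of fun x y => if (x.1 : ℕ) = y.1 + 1 then H x y else 0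

noncomputable def subdiagInv (H : Matrix (Fin m × Fin s) (Fin m × Fin s) ℂ) :
    Matrix (Fin m × Fin s) (Fin m × Fin s) ℂ :=
  Matrix.of fun x y => if (y.1 : ℕ) = x.1 + 1 then (Gam H (x.1 + 2))⁻¹ x.2 y.2 else 0

lemma blk_subdiag (H : Matrix (Fin m × Fin s) (Fin m × Fin s) ℂ) (p q : Fin m) :
    blk (subdiag H) p q = if (p : ℕ) = q + 1 then blk H p q else 0 := by
  ext a b
  by_cases h : (p : ℕ) = q + 1 <;> simp [blk, subdiag, h]

lemma blk_subdiagInv (H : Matrix (Fin m × Fin s) (Fin m × Fin s) ℂ) (p q : Fin m) :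
    blk (subdiagInv H) p q = if (q : ℕ) = p + 1 then (Gam H (p + 2))⁻¹ else 0 := by
  ext a b
  by_cases h : (q : ℕ) = p + 1 <;> simp [blk, subdiagInv, h]

noncomputable def hornerCol {ι : Type*} [Fintype ι] [DecidableEq ι] (P : Polynomial (Mat s))
    (N : Matrix ι ι ℂ) (W : Matrix ι (Fin s) ℂ) (z : ℂ) : Matrix ι (Fin s) ℂ :=
  ∑ i ∈ Finset.range (P.natDegree + 1),
    (∑ k ∈ Finset.range i, z ^ k • N ^ (i - 1 - k)) * W * P.coeff i

lemma sub_mul_hornerCol {ι : Type*} [Fintype ι] [DecidableEq ι] (P : Polynomial (Mat s))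
    (N : Matrix ι ι ℂ) (W : Matrix ι (Fin s) ℂ) (z : ℂ) :
    (z • 1 - N) * hornerCol P N W z = W * evalS P z - act P N W := by
  have hgeom : ∀ i, (z • 1 - N) * ∑ k ∈ Finset.range i, z ^ k • N ^ (i - 1 - k) =
      z ^ i • 1 - N ^ i := fun i => by
    simpa [_root_.smul_pow] using ((Commute.one_left N).smul_left z).mul_geom_sum₂ i
  simp only [hornerCol, evalS, act, Matrix.mul_sum, ← Finset.sum_sub_distrib, ← Matrix.mul_assoc,
    hgeom]
  refine Finset.sum_congr rfl fun i _ => ?_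
  rw [Matrix.sub_mul, Matrix.sub_mul, Matrix.smul_mul, Matrix.one_mul, Matrix.mul_smul,
    Matrix.smul_mul]

/- From here on `j = n + 1` and blocks are indexed from `0`: the paper's `E₁`, `Eⱼ` are
`blkE 0`, `blkE (Fin.last n)`, and `Γ_{p+2}` is the block `(p + 1, p)` of `H`. -/
variable (H : Matrix (Fin (n + 1) × Fin s) (Fin (n + 1) × Fin s) ℂ)
  (hinv : ∀ i : ℕ, 2 ≤ i → i ≤ n + 1 → IsUnit (Gam H i)) (hH : BUH H)

include hinv in
lemma subdiag_mul_subdiagInv :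
    subdiag H * subdiagInv H = 1 - blkE (s := s) 0 * (blkE (s := s) 0)ᵀ := by
  refine blk_ext fun p q => ?_
  simp only [blk_mul, blk_subdiag, ite_mul, zero_mul, blk_sub, blk_one,
    blk_blkE_mul_transpose, blk_subdiagInv]
  by_cases hp : (p : ℕ) = 0
  · obtain rfl : p = 0 := Fin.ext hp
    rw [Finset.sum_eq_zero fun x _ => if_neg (by omega)]
    by_cases hq : q = 0
    · simp [hq]
    · simp [hq, Ne.symm hq]
  · obtain ⟨r, hr⟩ : ∃ r : Fin (n + 1), (p : ℕ) = r + 1 := ⟨⟨p - 1, by omega⟩, by simp; omega⟩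
    rw [sum_ite_eq_of_iff (r := r) fun x => by rw [Fin.ext_iff]; omega, ← Gam_eq_blk H hr,
      if_neg (show ¬(p = 0 ∧ q = 0) from fun h => hp (by simp [h.1]))]
    have hpq : (q : ℕ) = r + 1 ↔ p = q := by rw [Fin.ext_iff]; omega
    by_cases h : p = q
    · rw [if_pos (hpq.2 h), if_pos h, sub_zero, Matrix.mul_nonsing_inv]
      exact (Matrix.isUnit_iff_isUnit_det _).mp (hinv _ (by omega) (by omega))
    · rw [if_neg (mt hpq.1 h), if_neg h, mul_zero, sub_zero]

include hinv in
lemma subdiagInv_mul_subdiag :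
    subdiagInv H * subdiag H =
      1 - blkE (s := s) (Fin.last n) * (blkE (s := s) (Fin.last n))ᵀ := by
  refine blk_ext fun p q => ?_
  simp only [blk_mul, blk_subdiagInv, blk_subdiag, ite_mul, zero_mul, blk_sub, blk_one,
    blk_blkE_mul_transpose]
  by_cases hp : (p : ℕ) = n
  · obtain rfl : p = Fin.last n := Fin.ext hp
    rw [Finset.sum_eq_zero fun x _ => if_neg (by omega)]
    by_cases hq : q = Fin.last n
    · simp [hq]
    · simp [hq, Ne.symm hq]
  · obtain ⟨r, hr⟩ : ∃ r : Fin (n + 1), (r : ℕ) = p + 1 := ⟨⟨p + 1, by omega⟩, rfl⟩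
    rw [sum_ite_eq_of_iff (r := r) fun x => by rw [Fin.ext_iff]; omega,
      if_neg (show ¬(p = Fin.last n ∧ q = Fin.last n) from fun h => hp (by simp [h.1]))]
    have hpq : (r : ℕ) = q + 1 ↔ p = q := by rw [Fin.ext_iff]; omega
    by_cases h : p = q
    · subst h
      rw [if_pos (hpq.2 rfl), if_pos rfl, sub_zero, ← Gam_eq_blk H hr, Matrix.nonsing_inv_mul]
      exact (Matrix.isUnit_iff_isUnit_det _).mp (hinv _ (by omega) (by omega))
    · rw [if_neg (mt hpq.1 h), if_neg h, mul_zero, sub_zero]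

lemma subdiagInv_mul_blkE_zero : subdiagInv H * blkE (s := s) (0 : Fin (n + 1)) = 0 :=
  mul_blkE_eq_zero fun p => by simp [blk_subdiagInv]

lemma transpose_blkE_last_mul_subdiagInv : (blkE (s := s) (Fin.last n))ᵀ * subdiagInv H = 0 :=
  transpose_blkE_mul_eq_zero fun q => by rw [blk_subdiagInv, if_neg (by simp; omega)]

lemma subdiag_mul_blkE_last : subdiag H * blkE (s := s) (Fin.last n) = 0 :=
  mul_blkE_eq_zero fun p => by rw [blk_subdiag, if_neg (by simp; omega)]

lemma transpose_blkE_zero_mul_subdiag : (blkE (s := s) (0 : Fin (n + 1)))ᵀ * subdiag H = 0 :=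
  transpose_blkE_mul_eq_zero fun q => by simp [blk_subdiag]

include hH in
lemma blk_subdiagInv_mul_eq_zero (z : ℂ) {p q : Fin (n + 1)} (hqp : q ≤ p) :
    blk (subdiagInv H * (z • 1 - H + subdiag H)) p q = 0 := by
  rw [blk_mul]
  refine Finset.sum_eq_zero fun r _ => ?_
  rw [blk_subdiagInv]
  split_ifs with hr
  · rw [blk_add, blk_sub, blk_smul, blk_one, blk_subdiag, if_neg (by rw [Fin.ext_iff]; omega)]
    split_ifs with hrq
    · simp
    · rw [hH r q (by omega)]; simp
  · exact zero_mul _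

include hH in
lemma blk_pow_eq_zero_of_lt {k : ℕ} {p : Fin (n + 1)} (hkp : k < p) : blk (H ^ k) p 0 = 0 := by
  induction k generalizing p with
  | zero => rw [pow_zero, blk_one, if_neg (by rintro rfl; simp at hkp)]
  | succ k ih =>
    rw [pow_succ', blk_mul]
    refine Finset.sum_eq_zero fun r _ => ?_
    by_cases hr : (r : ℕ) + 1 < p
    · rw [hH p r hr, zero_mul]
    · rw [ih (by omega), mul_zero]

include hH hinv in
lemma blk_pow_mul_prod_inv {k : ℕ} (p : Fin (n + 1)) (hp : (p : ℕ) = k) :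
    blk (H ^ k) p 0 * ((List.range k).map fun i => (Gam H (i + 2))⁻¹).prod = 1 := by
  induction k generalizing p with
  | zero =>
    obtain rfl : p = 0 := Fin.ext hp
    simp [blk_one]
  | succ k ih =>
    obtain ⟨r, hr⟩ : ∃ r : Fin (n + 1), (r : ℕ) = k := ⟨⟨k, by omega⟩, rfl⟩
    have hstep : blk (H ^ (k + 1)) p 0 = Gam H (k + 2) * blk (H ^ k) r 0 := by
      rw [pow_succ', blk_mul, Fintype.sum_eq_single r, show k + 2 = (r : ℕ) + 2 by omega,
        Gam_eq_blk H (show (p : ℕ) = r + 1 by omega)]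
      intro x hx
      have hxr : (x : ℕ) ≠ r := fun h => hx (Fin.ext h)
      by_cases hxk : (x : ℕ) < k
      · rw [hH p x (by omega), zero_mul]
      · rw [blk_pow_eq_zero_of_lt H hH (by omega), mul_zero]
    have hΓ : IsUnit (Gam H (k + 2)).det :=
      (Matrix.isUnit_iff_isUnit_det _).mp (hinv _ (by omega) (by omega))
    rw [hstep, List.range_succ, List.map_append, List.prod_append, List.map_singleton,
      List.prod_singleton, Matrix.mul_assoc, ← Matrix.mul_assoc (blk _ r 0), ih r hr,
      Matrix.one_mul, Matrix.mul_nonsing_inv _ hΓ]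

noncomputable def rightFactor (z : ℂ) : Matrix (Fin (n + 1) × Fin s) (Fin (n + 1) × Fin s) ℂ :=
  (1 - subdiagInv H * (z • 1 - H + subdiag H))⁻¹

include hH in
lemma det_one_sub_subdiagInv_mul (z : ℂ) :
    (1 - subdiagInv H * (z • 1 - H + subdiag H)).det = 1 :=
  det_one_sub_eq_one fun _ _ => blk_subdiagInv_mul_eq_zero H hH z

include hH in
lemma det_rightFactor (z : ℂ) : (rightFactor H z).det = 1 := by
  rw [rightFactor, Matrix.det_nonsing_inv, det_one_sub_subdiagInv_mul H hH, Ring.inverse_one]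

include hH in
lemma one_sub_mul_rightFactor (z : ℂ) :
    (1 - subdiagInv H * (z • 1 - H + subdiag H)) * rightFactor H z = 1 :=
  Matrix.mul_nonsing_inv _ (by rw [det_one_sub_subdiagInv_mul H hH]; exact isUnit_one)

include hH in
lemma rightFactor_mul_one_sub (z : ℂ) :
    rightFactor H z * (1 - subdiagInv H * (z • 1 - H + subdiag H)) = 1 :=
  Matrix.nonsing_inv_mul _ (by rw [det_one_sub_subdiagInv_mul H hH]; exact isUnit_one)

include hH hinv in
lemma one_sub_blkE_zero_mul_mul_rightFactor (z : ℂ) :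
    (1 - blkE (s := s) (0 : Fin (n + 1)) * (blkE (s := s) (0 : Fin (n + 1)))ᵀ) *
      ((z • 1 - H) * rightFactor H z) = -subdiag H := by
  set S := subdiagInv H
  set L := subdiag H
  set F := rightFactor H z
  set V := z • 1 - H + L
  have hF : S * V * F = F - 1 := by
    have := one_sub_mul_rightFactor H hH z
    rw [Matrix.sub_mul, Matrix.one_mul] at this
    rw [← this, sub_sub_cancel]
  have hLS : L * S = 1 - blkE (s := s) (0 : Fin (n + 1)) * (blkE (s := s) (0 : Fin (n + 1)))ᵀ :=
    subdiag_mul_subdiagInv H hinv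
  have hLSL : L * S * L = L := by
    rw [hLS, Matrix.sub_mul, Matrix.one_mul, Matrix.mul_assoc, transpose_blkE_zero_mul_subdiag,
      Matrix.mul_zero, sub_zero]
  calc (1 - blkE (s := s) (0 : Fin (n + 1)) * (blkE (s := s) (0 : Fin (n + 1)))ᵀ) *
        ((z • 1 - H) * F)
      = L * S * ((V - L) * F) := by rw [hLS, add_sub_cancel_right]
    _ = L * (S * V * F) - L * S * L * F := by
      simp only [Matrix.sub_mul, Matrix.mul_sub, Matrix.mul_assoc]
    _ = -L := by rw [hF, hLSL, Matrix.mul_sub, Matrix.mul_one]; abel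

def antiTriangular (A : Mat s) : Matrix (Fin (n + 1) × Fin s) (Fin (n + 1) × Fin s) ℂ :=
  blkE (s := s) 0 * A * (blkE (s := s) (Fin.last n))ᵀ - subdiag H

lemma blk_antiTriangular (A : Mat s) (p q : Fin (n + 1)) :
    blk (antiTriangular H A) p q =
      (if p = 0 ∧ q = Fin.last n then A else 0) - if (p : ℕ) = q + 1 then blk H p q else 0 := by
  rw [antiTriangular, blk_sub, blk_blkE_mul_mul_transpose, blk_subdiag]

lemma antiTriangular_one_mul_blkE_last :
    antiTriangular H 1 * blkE (s := s) (Fin.last n) = blkE 0 := by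
  rw [antiTriangular, Matrix.sub_mul, Matrix.mul_one, Matrix.mul_assoc, transpose_blkE_mul_blkE,
    if_pos rfl, Matrix.mul_one, subdiag_mul_blkE_last, sub_zero]

lemma det_antiTriangular (A : Mat s) :
    (antiTriangular H A).det = (antiTriangular H 1).det * A.det := by
  have hfac : antiTriangular H A = antiTriangular H 1 *
      (1 + blkE (s := s) (Fin.last n) * ((A - 1) * (blkE (s := s) (Fin.last n))ᵀ)) := by
    rw [Matrix.mul_add, Matrix.mul_one, ← Matrix.mul_assoc, antiTriangular_one_mul_blkE_last,
      antiTriangular, antiTriangular]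
    simp only [Matrix.mul_sub, Matrix.sub_mul, Matrix.mul_one, Matrix.one_mul, Matrix.mul_assoc]
    abel
  rw [hfac, Matrix.det_mul, Matrix.det_one_add_mul_comm, Matrix.mul_assoc, transpose_blkE_mul_blkE,
    if_pos rfl, Matrix.mul_one, add_sub_cancel]

include hinv in
lemma antiTriangular_one_mul_eq_one :
    antiTriangular H 1 * (blkE (s := s) (Fin.last n) * (blkE (s := s) (0 : Fin (n + 1)))ᵀ
      - subdiagInv H) = 1 := by
  rw [Matrix.mul_sub, ← Matrix.mul_assoc, antiTriangular_one_mul_blkE_last, antiTriangular,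
    Matrix.sub_mul, Matrix.mul_assoc, transpose_blkE_last_mul_subdiagInv, Matrix.mul_zero,
    subdiag_mul_subdiagInv H hinv]
  abel

noncomputable def leftFactor (Λ : Polynomial (Mat s)) (z : ℂ) :
    Matrix (Fin (n + 1) × Fin s) (Fin (n + 1) × Fin s) ℂ :=
  1 + blkE (s := s) 0 * (((blkE (s := s) 0)ᵀ * ((z • 1 - H) * rightFactor H z)
    - evalS Λ z * (blkE (s := s) (Fin.last n))ᵀ) * subdiagInv H)

lemma det_leftFactor (Λ : Polynomial (Mat s)) (z : ℂ) : (leftFactor H Λ z).det = 1 := by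
  rw [leftFactor, Matrix.det_one_add_mul_comm, Matrix.mul_assoc, subdiagInv_mul_blkE_zero,
    Matrix.mul_zero, add_zero, Matrix.det_one]

section CharPoly

variable {Λ : Polynomial (Mat s)} (hdeg : Λ.natDegree = n + 1)
  (hlead : Λ.leadingCoeff = ((List.range n).map fun i => (Gam H (i + 2))⁻¹).prod)
  (hann : act Λ H (blkE (0 : Fin (n + 1))) = 0)

include hH hinv hdeg hlead in
lemma transpose_blkE_last_mul_hornerCol (z : ℂ) :
    (blkE (s := s) (Fin.last n))ᵀ * hornerCol Λ H (blkE 0) z = 1 := by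
  have hlow : ∀ i k, i - 1 - k < n → blk (H ^ (i - 1 - k)) (Fin.last n) 0 = 0 := fun i k h =>
    blk_pow_eq_zero_of_lt H hH (by simpa using h)
  simp only [hornerCol, Matrix.mul_sum, Matrix.sum_mul, transpose_blkE_mul_smul_mul_blkE_mul]
  have hcoeff : Λ.coeff (n + 1) = ((List.range n).map fun i => (Gam H (i + 2))⁻¹).prod := by
    rw [← hlead, Polynomial.leadingCoeff, hdeg]
  rw [hdeg, Finset.sum_range_succ, Finset.sum_eq_zero fun i hi => Finset.sum_eq_zero fun k hk => by
      rw [hlow i k (by simp at hi hk; omega), zero_mul, smul_zero],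
    zero_add, Finset.sum_eq_single_of_mem 0 (by simp) fun k hk hk0 => by
      rw [hlow _ _ (by simp at hk; omega), zero_mul, smul_zero],
    pow_zero, one_smul, hcoeff, Nat.add_sub_cancel, Nat.sub_zero]
  exact blk_pow_mul_prod_inv H hinv hH _ rfl

include hann in
lemma sub_mul_hornerCol_of_act_eq_zero (z : ℂ) :
    (z • 1 - H) * hornerCol Λ H (blkE 0) z = blkE (s := s) (0 : Fin (n + 1)) * evalS Λ z := by
  rw [sub_mul_hornerCol, hann, sub_zero]

include hH hinv hdeg hlead hann in
lemma rightFactor_mul_blkE_last (z : ℂ) :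
    rightFactor H z * blkE (s := s) (Fin.last n) = hornerCol Λ H (blkE 0) z := by
  set h := hornerCol Λ H (blkE (s := s) (0 : Fin (n + 1))) z
  have hfix : (1 - subdiagInv H * (z • 1 - H + subdiag H)) * h = blkE (Fin.last n) := by
    calc (1 - subdiagInv H * (z • 1 - H + subdiag H)) * h
        = h - subdiagInv H * (blkE (s := s) (0 : Fin (n + 1)) * evalS Λ z)
            - subdiagInv H * subdiag H * h := by
          rw [← sub_mul_hornerCol_of_act_eq_zero H hann]
          simp only [Matrix.sub_mul, Matrix.one_mul, Matrix.mul_add, Matrix.add_mul,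
            Matrix.mul_assoc]
          abel
      _ = blkE (Fin.last n) := by
          rw [← Matrix.mul_assoc, subdiagInv_mul_blkE_zero, Matrix.zero_mul, sub_zero,
            subdiagInv_mul_subdiag H hinv, Matrix.sub_mul, Matrix.one_mul, Matrix.mul_assoc,
            transpose_blkE_last_mul_hornerCol H hinv hH hdeg hlead, Matrix.mul_one, sub_sub_cancel]
  rw [← hfix, ← Matrix.mul_assoc, rightFactor_mul_one_sub H hH, Matrix.one_mul]

include hH hinv hdeg hlead hann in
lemma leftFactor_mul_mul_rightFactor (z : ℂ) :
    leftFactor H Λ z * (z • 1 - H) * rightFactor H z = antiTriangular H (evalS Λ z) := by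
  set E := blkE (s := s) (0 : Fin (n + 1))
  set El := blkE (s := s) (Fin.last n)
  set N := (z • 1 - H) * rightFactor H z
  set w := Eᵀ * N - evalS Λ z * Elᵀ
  have hrows : (1 - E * Eᵀ) * N = -subdiag H := one_sub_blkE_zero_mul_mul_rightFactor H hinv hH z
  have hlast : N * El = E * evalS Λ z := by
    rw [Matrix.mul_assoc, rightFactor_mul_blkE_last H hinv hH hdeg hlead hann,
      sub_mul_hornerCol_of_act_eq_zero H hann]
  have hSN : subdiagInv H * N = -(1 - El * Elᵀ) := by
    have hSQ : subdiagInv H * (1 - E * Eᵀ) = subdiagInv H := by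
      rw [Matrix.mul_sub, Matrix.mul_one, ← Matrix.mul_assoc, subdiagInv_mul_blkE_zero,
        Matrix.zero_mul, sub_zero]
    rw [← hSQ, Matrix.mul_assoc, hrows, Matrix.mul_neg, subdiagInv_mul_subdiag H hinv]
  have hwl : w * El = 0 := by
    rw [Matrix.sub_mul, Matrix.mul_assoc, hlast, ← Matrix.mul_assoc, Matrix.mul_assoc _ Elᵀ,
      transpose_blkE_mul_blkE, transpose_blkE_mul_blkE, if_pos rfl, if_pos rfl, Matrix.one_mul,
      Matrix.mul_one, sub_self]
  calc leftFactor H Λ z * (z • 1 - H) * rightFactor H z = N + E * (w * (subdiagInv H * N)) := by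
        rw [Matrix.mul_assoc, leftFactor, Matrix.add_mul, Matrix.one_mul, Matrix.mul_assoc,
          Matrix.mul_assoc]
        rfl
    _ = (1 - E * Eᵀ) * N + E * evalS Λ z * Elᵀ + E * (w * El) * Elᵀ := by
        rw [hSN]
        simp only [w, Matrix.mul_neg, Matrix.mul_sub, Matrix.sub_mul, Matrix.mul_one,
          Matrix.one_mul, Matrix.mul_assoc]
        abel
    _ = antiTriangular H (evalS Λ z) := by
        rw [hwl, hrows, Matrix.mul_zero, Matrix.zero_mul, add_zero, antiTriangular]
        abel

end CharPoly

end BlockHessenberg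

open BlockHessenberg

/-- a block upper Hessenberg matrix `H` with invertible subdiagonal
blocks is a linearization of its block characteristic polynomial `Λ` w.r.t. `E₁`
with leading coefficient `Γ₂⁻¹ ⋯ Γⱼ⁻¹`: there are matrix functions `G, F`,
invertible at every eigenvalue of `H`, bringing `λI − H` to block anti-triangular
form with `Λ(λ)` in the top-right block and `−Γ₂, …, −Γⱼ` on the subdiagonal;
in particular `det(λI − H) = c · det Λ(λ)` for a nonzero constant `c`. -/
theorem hessenberg_is_linearization {j s : ℕ} (hj : 0 < j)
    (H : Matrix (Fin j × Fin s) (Fin j × Fin s) ℂ) (hH : BUH H)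
    (hinv : ∀ i : ℕ, 2 ≤ i → i ≤ j → IsUnit (Gam H i))
    (Λ : Polynomial (Mat s)) (hdeg : Λ.natDegree = j)
    (hlead : Λ.leadingCoeff =
      ((List.range (j - 1)).map (fun m => (Gam H (m + 2))⁻¹)).prod)
    (hann : act Λ H (blkE (⟨0, hj⟩ : Fin j)) = 0) :
    ∃ (G F : ℂ → Matrix (Fin j × Fin s) (Fin j × Fin s) ℂ) (c : ℂ), c ≠ 0 ∧
      (∀ θ : ℂ, (θ • (1 : Matrix (Fin j × Fin s) (Fin j × Fin s) ℂ) - H).det = 0 →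
        IsUnit (G θ) ∧ IsUnit (F θ)) ∧
      (∀ z : ℂ,
        blk (G z * (z • 1 - H) * F z) ⟨0, hj⟩ ⟨j - 1, by omega⟩ = evalS Λ z ∧
        (∀ (m : ℕ) (hm : m + 1 < j),
          blk (G z * (z • 1 - H) * F z) ⟨m + 1, hm⟩ ⟨m, by omega⟩ =
            -(blk H ⟨m + 1, hm⟩ ⟨m, by omega⟩)) ∧
        (∀ p q : Fin j, (p : ℕ) ≠ (q : ℕ) + 1 → ¬((p : ℕ) = 0 ∧ (q : ℕ) = j - 1) →
          blk (G z * (z • 1 - H) * F z) p q = 0)) ∧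
      (∀ z : ℂ, (z • (1 : Matrix (Fin j × Fin s) (Fin j × Fin s) ℂ) - H).det =
        c * (evalS Λ z).det) := by
  obtain ⟨n, rfl⟩ : ∃ n, j = n + 1 := ⟨j - 1, by omega⟩
  have hlead' : Λ.leadingCoeff = ((List.range n).map fun i => (Gam H (i + 2))⁻¹).prod := hlead
  have hT := leftFactor_mul_mul_rightFactor H hinv hH hdeg hlead' hann
  refine ⟨leftFactor H Λ, rightFactor H, (antiTriangular H 1).det,
    Matrix.det_ne_zero_of_right_inverse (antiTriangular_one_mul_eq_one H hinv), fun θ _ =>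
      ⟨(Matrix.isUnit_iff_isUnit_det _).mpr (by rw [det_leftFactor]; exact isUnit_one),
        (Matrix.isUnit_iff_isUnit_det _).mpr (by rw [det_rightFactor H hH]; exact isUnit_one)⟩,
    fun z => ⟨?_, fun m hm => ?_, fun p q hpq hpq' => ?_⟩, fun z => ?_⟩
  · rw [hT, blk_antiTriangular, if_pos ⟨rfl, rfl⟩, if_neg (by simp), sub_zero]
  · rw [hT, blk_antiTriangular, if_neg (by simp [Fin.ext_iff]), if_pos rfl, zero_sub]
  · rw [hT, blk_antiTriangular, if_neg hpq,
      if_neg fun h => hpq' ⟨by simp [h.1], by simp [h.2]⟩, sub_zero]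
  · rw [← det_antiTriangular, ← hT, Matrix.det_mul, Matrix.det_mul, det_leftFactor,
      det_rightFactor H hH, one_mul, mul_one]
end

section
/- Let $R \in \mathcal{K}^\square_{j+1}(A,B) \cap \mathcal{Z}^\perp$ be a nonzero block vector, where the block Arnoldi process for $(A,B)$ runs $j+1$ steps without breakdown and $\mathbf{Z}_j^*\mathbf{U}_j$ is invertible. Then there exists a block characteristic polynomial $P(\lambda)$ of degree $j$ for $A_j := (\mathbf{Z}_j^*\mathbf{U}_j)^{-1}\mathbf{Z}_j^*A\mathbf{U}_j$ with respect to $E_1 R_B$ (i.e., $P(A_j)\circ(E_1 R_B) = 0$ with nonzero leading coefficient) such that $R = P(A)\circ B$. -/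
open Matrix Polynomial

/-!
Iterating the block Arnoldi relation `A U = U H + u Γ E_jᴴ` on `U E₁` gives
`Aⁱ U E₁ = U Hⁱ E₁` for `i < j`, because `H` is block upper Hessenberg; only the top
power leaves the range of `U`, so
`P(A) ∘ B = U (P(H) ∘ E₁R_B) + u Γ (E_jᴴ H^{j-1} E₁) R_B P_j`.
The projected matrix `A_j` satisfies the same kind of relation with `U` replaced by the
identity, and applying `Zᴴ` to the first identity shows `Zᴴ R = (Zᴴ U) (P(A_j) ∘ E₁R_B)`.
Hence `Zᴴ R = 0` forces `P(A_j) ∘ E₁R_B = 0`, and then `R = 0` unless `P_j ≠ 0`.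
-/

open Finset

section HessenbergPowers

variable {j s : ℕ} {H : Matrix (Fin j × Fin s) (Fin j × Fin s) ℂ}

theorem BUH.blk_pow_eq_zero (hH : BUH H) :
    ∀ (k : ℕ) (p q : Fin j), (q : ℕ) + k < p → blk (H ^ k) p q = 0 := by
  intro k
  induction k with
  | zero =>
    intro p q hqp
    ext a b
    have hpq : p ≠ q := fun h => by subst h; omega
    simp [blk, hpq]
  | succ k ih =>
    intro p q hqp
    ext a b
    simp only [blk, Matrix.of_apply, Matrix.zero_apply, pow_succ', Matrix.mul_apply]
    refine Finset.sum_eq_zero fun ⟨r, c⟩ _ => ?_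
    by_cases hr : (r : ℕ) + 1 < p
    · simp [show H (p, a) (r, c) = 0 from congrFun (congrFun (hH p r hr) a) c]
    · simp [show (H ^ k) (r, c) (q, b) = 0 from
        congrFun (congrFun (ih r q (by omega)) c) b]

theorem blkE_conjTranspose_mul_mul_blkE
    (N : Matrix (Fin j × Fin s) (Fin j × Fin s) ℂ) (p q : Fin j) :
    (blkE (s := s) p)ᴴ * N * blkE (s := s) q = blk N p q := by
  ext a b
  simp only [blk, blkE, Matrix.mul_apply, Matrix.conjTranspose_apply, Matrix.of_apply,
    Fintype.sum_prod_type]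
  simp [apply_ite (star : ℂ → ℂ), ite_and]

end HessenbergPowers

section ArnoldiRelation

variable {m k l : Type*} [Fintype m] [Fintype k] [Fintype l]

theorem inv_mul_mul_mul_eq_of_mul_eq_add {α : Type*} [CommRing α] [DecidableEq k]
    {X : Matrix m m α} {V : Matrix m k α} {H : Matrix k k α} {w : Matrix m l α}
    {F : Matrix l k α}
    (hX : X * V = V * H + w * F) (Y : Matrix k m α) (hYV : IsUnit (Y * V)) :
    (Y * V)⁻¹ * (Y * X * V) = H + ((Y * V)⁻¹ * (Y * w)) * F := by
  rw [Matrix.mul_assoc Y, hX, Matrix.mul_add, Matrix.mul_add, ← Matrix.mul_assoc Y V,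
    ← Matrix.mul_assoc, Matrix.nonsing_inv_mul _ ((Matrix.isUnit_iff_isUnit_det _).mp hYV),
    Matrix.one_mul]
  simp only [Matrix.mul_assoc]

variable [DecidableEq m] [DecidableEq k]

theorem pow_mul_mul_eq_of_mul_eq_add {α o : Type*} [Semiring α] {X : Matrix m m α}
    {V : Matrix m k α} {H : Matrix k k α} {w : Matrix m l α} {F : Matrix l k α}
    {E : Matrix k o α} {d : ℕ} (hX : X * V = V * H + w * F)
    (hF : ∀ i < d, F * H ^ i * E = 0) :
    ∀ i ≤ d, X ^ i * V * E = V * H ^ i * E := by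
  intro i
  induction i with
  | zero => simp
  | succ i ih =>
    intro hi
    calc X ^ (i + 1) * V * E = X * (X ^ i * V * E) := by simp only [pow_succ', Matrix.mul_assoc]
      _ = (V * H + w * F) * H ^ i * E := by
        rw [ih (by omega), ← hX]; simp only [Matrix.mul_assoc]
      _ = V * H ^ (i + 1) * E := by
        rw [Matrix.add_mul, Matrix.add_mul, Matrix.mul_assoc w F, Matrix.mul_assoc w,
          hF i (by omega), Matrix.mul_zero, add_zero]
        simp only [pow_succ', Matrix.mul_assoc]

theorem pow_succ_mul_mul_eq_of_mul_eq_add {α o : Type*} [Semiring α] {X : Matrix m m α}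
    {V : Matrix m k α} {H : Matrix k k α} {w : Matrix m l α} {F : Matrix l k α}
    {E : Matrix k o α} {d : ℕ} (hX : X * V = V * H + w * F)
    (hF : ∀ i < d, F * H ^ i * E = 0) :
    X ^ (d + 1) * V * E = V * H ^ (d + 1) * E + w * (F * H ^ d * E) :=
  calc X ^ (d + 1) * V * E = X * (X ^ d * V * E) := by simp only [pow_succ', Matrix.mul_assoc]
    _ = (V * H + w * F) * H ^ d * E := by
      rw [pow_mul_mul_eq_of_mul_eq_add hX hF d le_rfl, ← hX]; simp only [Matrix.mul_assoc]
    _ = V * H ^ (d + 1) * E + w * (F * H ^ d * E) := by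
      simp only [Matrix.add_mul, pow_succ', Matrix.mul_assoc]

theorem act_eq_sum_range_of_natDegree_le {s : ℕ} (P : Polynomial (Mat s)) (N : Matrix k k ℂ)
    (W : Matrix k (Fin s) ℂ) {D : ℕ} (hP : P.natDegree ≤ D) :
    act P N W = ∑ i ∈ range (D + 1), N ^ i * W * P.coeff i := by
  refine Finset.sum_subset (Finset.range_subset_range.mpr (by omega)) fun i _ hi => ?_
  rw [Polynomial.coeff_eq_zero_of_natDegree_lt (by simpa using hi), Matrix.mul_zero]

theorem act_mul_eq_of_mul_eq_add {s : ℕ} {X : Matrix m m ℂ} {V : Matrix m k ℂ}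
    {H : Matrix k k ℂ} {w : Matrix m l ℂ} {F : Matrix l k ℂ} {E : Matrix k (Fin s) ℂ}
    {d : ℕ}
    (hX : X * V = V * H + w * F) (hF : ∀ i < d, F * H ^ i * E = 0)
    (P : Polynomial (Mat s)) (hP : P.natDegree ≤ d + 1) :
    act P X (V * E) = V * act P H E + w * (F * H ^ d * E) * P.coeff (d + 1) := by
  have hlow : ∑ i ∈ range (d + 1), X ^ i * (V * E) * P.coeff i =
      V * ∑ i ∈ range (d + 1), H ^ i * E * P.coeff i := by
    rw [Matrix.mul_sum]
    refine Finset.sum_congr rfl fun i hi => ?_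
    rw [← Matrix.mul_assoc, pow_mul_mul_eq_of_mul_eq_add hX hF i
      (Nat.lt_succ_iff.mp (Finset.mem_range.mp hi))]
    simp only [Matrix.mul_assoc]
  rw [act_eq_sum_range_of_natDegree_le _ _ _ hP, act_eq_sum_range_of_natDegree_le _ _ _ hP,
    Finset.sum_range_succ _ (d + 1), Finset.sum_range_succ _ (d + 1), hlow, ← Matrix.mul_assoc,
    pow_succ_mul_mul_eq_of_mul_eq_add hX hF]
  simp only [Matrix.add_mul, Matrix.mul_add, Matrix.mul_assoc, add_assoc]

end ArnoldiRelation

/-- any nonzero block vector in `𝒦□_{j+1}(A,B) ∩ 𝒵^⊥` is of the form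
`P(A)∘B` for a block characteristic polynomial `P` of `A_j` with respect to `E₁R_B`. -/
theorem residual_is_char_poly_action {n j s : ℕ} (hj : 0 < j)
    (A : Matrix (Fin n) (Fin n) ℂ)
    (U Z : Matrix (Fin n) (Fin j × Fin s) ℂ)
    (u : Matrix (Fin n) (Fin s) ℂ)
    (Hj : Matrix (Fin j × Fin s) (Fin j × Fin s) ℂ) (Γ : Mat s)
    (harn : A * U = U * Hj + u * Γ * (blkE (s := s) (⟨j - 1, by omega⟩ : Fin j))ᴴ)
    (hBUH : BUH Hj)
    (hZU : IsUnit (Zᴴ * U))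
    (RB : Mat s)
    (B : Matrix (Fin n) (Fin s) ℂ)
    (hB : B = U * blkE (s := s) (⟨0, hj⟩ : Fin j) * RB)
    (Aj : Matrix (Fin j × Fin s) (Fin j × Fin s) ℂ)
    (hAj : Aj = (Zᴴ * U)⁻¹ * (Zᴴ * A * U))
    (R : Matrix (Fin n) (Fin s) ℂ) (hR0 : R ≠ 0)
    (hRK : ∃ Q : Polynomial (Mat s), Q.natDegree ≤ j ∧ R = act Q A B)
    (hRZ : Zᴴ * R = 0) :
    ∃ P : Polynomial (Mat s), P.natDegree = j ∧ P.leadingCoeff ≠ 0 ∧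
      act P Aj (blkE (s := s) (⟨0, hj⟩ : Fin j) * RB) = 0 ∧
      R = act P A B := by
  obtain ⟨Q, hQ, rfl⟩ := hRK
  set E := blkE (s := s) (⟨0, hj⟩ : Fin j) * RB
  set Ej := blkE (s := s) (⟨j - 1, by omega⟩ : Fin j)
  set M := (Zᴴ * U)⁻¹ * (Zᴴ * (u * Γ))
  have hj1 : j - 1 + 1 = j := by omega
  have hHess : ∀ i < j - 1, Ejᴴ * Hj ^ i * E = 0 := fun i hi => by
    rw [← Matrix.mul_assoc, blkE_conjTranspose_mul_mul_blkE,
      hBUH.blk_pow_eq_zero i _ _ (by simp; omega), Matrix.zero_mul]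
  have hAjArn : Aj * 1 = 1 * Hj + M * Ejᴴ := by
    rw [Matrix.mul_one, Matrix.one_mul, hAj]
    exact inv_mul_mul_mul_eq_of_mul_eq_add harn _ hZU
  have hdecA := act_mul_eq_of_mul_eq_add harn hHess Q (hj1 ▸ hQ)
  have hdecAj := act_mul_eq_of_mul_eq_add hAjArn hHess Q (hj1 ▸ hQ)
  rw [hj1, ← Matrix.mul_assoc, ← hB] at hdecA
  rw [hj1, Matrix.one_mul, Matrix.one_mul] at hdecAj
  have hdet := (Matrix.isUnit_iff_isUnit_det _).mp hZU
  have hZR : Zᴴ * act Q A B = (Zᴴ * U) * act Q Aj E := by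
    rw [hdecA, hdecAj, Matrix.mul_add, Matrix.mul_add, ← Matrix.mul_assoc Zᴴ U]
    congr 1
    simp only [M, ← Matrix.mul_assoc, Matrix.mul_nonsing_inv _ hdet, Matrix.one_mul]
  have hchar : act Q Aj E = 0 := by
    rw [← Matrix.nonsing_inv_mul_cancel_left _ (act Q Aj E) hdet, ← hZR, hRZ, Matrix.mul_zero]
  have hlead : Q.coeff j ≠ 0 := fun hQj => hR0 <| by
    have hHj : act Q Hj E = 0 := by rw [← hchar, hdecAj, hQj, Matrix.mul_zero, add_zero]
    rw [hdecA, hHj, hQj, Matrix.mul_zero, Matrix.mul_zero, add_zero]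
  have hdeg : Q.natDegree = j := le_antisymm hQ (Polynomial.le_natDegree_of_ne_zero hlead)
  exact ⟨Q, hdeg, by rwa [Polynomial.leadingCoeff, hdeg], hchar, rfl⟩
end

section
/- In the setting of the error formula $f(A)B - F_j = \sum_{h=1}^n x_h y_h^* \Pi U_{j+1}\Gamma_{j+1} M_h$ with $M_h := E_j^* K^{-1}[f(A_j) - f(\lambda_h)I](A_j - \lambda_h I)^{-1}E_1 R_B \in \mathbb{C}^{s\times s}$, one has the bound $\|f(A)B - F_j\|_F \le \kappa_{\mathrm{eig}}(A)\,\|\Pi U_{j+1}\Gamma_{j+1}\|_F\,\max_{1\le h\le n}\|M_h\|_2$, where $\kappa_{\mathrm{eig}}(A) = \|X\|_2\|X^{-1}\|_2$ for the eigenvector matrix $X = [x_1,\ldots,x_n]$. The key linear-algebra step is: for any $V \in \mathbb{C}^{n\times s}$ and matrices $M_h \in \mathbb{C}^{s\times s}$, $\|\sum_{h=1}^n x_h y_h^* V M_h\|_F \le \|V\|_F\, \|X\|_2\,\|X^{-1}\|_2\, \max_h \|M_h\|_2$. -/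
/-! Write `Y = X⁻¹`. The sum `∑ₕ xₕ yₕ* V Mₕ` equals `X R`, where row `h` of `R` is row `h` of
`Y V` multiplied on the right by `Mₕ`: this is the block-diagonal action `diag(Mₕᵀ)` of the
vectorized argument, read row by row. Left multiplication by a matrix, and right multiplication
of each row by its own `Mₕ`, scale the Frobenius norm by at most the corresponding spectral norms,
so `‖X R‖_F ≤ ‖X‖₂ (maxₕ ‖Mₕ‖₂) ‖Y‖₂ ‖V‖_F`. -/

open Matrix Polynomial

/-- Frobenius norm of a complex matrix. -/
noncomputable def frob {m n : Type*} [Fintype m] [Fintype n]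
    (M : Matrix m n ℂ) : ℝ :=
  Real.sqrt (∑ i, ∑ j, ‖M i j‖ ^ 2)

/-- Spectral (operator 2-) norm of a square complex matrix. -/
noncomputable def op2 {n : Type*} [Fintype n] [DecidableEq n]
    (M : Matrix n n ℂ) : ℝ :=
  ‖Matrix.toEuclideanCLM (𝕜 := ℂ) M‖

open scoped Matrix.Norms.L2Operator

section Norms

variable {l m n : Type*} [Fintype l] [Fintype m] [Fintype n]

lemma frob_le_mul_of_sq_le {M : Matrix m n ℂ} {N : Matrix l n ℂ} {c : ℝ} (hc : 0 ≤ c)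
    (h : ∑ i, ∑ j, ‖M i j‖ ^ 2 ≤ c ^ 2 * ∑ i, ∑ j, ‖N i j‖ ^ 2) :
    frob M ≤ c * frob N := by
  unfold frob
  rw [← Real.sqrt_sq hc, ← Real.sqrt_mul (sq_nonneg c)]
  exact Real.sqrt_le_sqrt h

variable [DecidableEq n]

lemma op2_nonneg (A : Matrix n n ℂ) : 0 ≤ op2 A :=
  norm_nonneg _

lemma op2_conjTranspose (A : Matrix n n ℂ) : op2 Aᴴ = op2 A :=
  Matrix.l2_opNorm_conjTranspose A

lemma sum_norm_sq_mulVec_le (A : Matrix n n ℂ) (x : n → ℂ) :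
    ∑ i, ‖(A *ᵥ x) i‖ ^ 2 ≤ op2 A ^ 2 * ∑ i, ‖x i‖ ^ 2 := by
  have h := Matrix.l2_opNorm_mulVec A (WithLp.toLp 2 x)
  rwa [← sq_le_sq₀ (norm_nonneg _) (mul_nonneg (norm_nonneg _) (norm_nonneg _)), mul_pow,
    EuclideanSpace.norm_sq_eq, EuclideanSpace.norm_sq_eq] at h

lemma sum_norm_sq_vecMul_le (x : n → ℂ) (A : Matrix n n ℂ) :
    ∑ i, ‖(x ᵥ* A) i‖ ^ 2 ≤ op2 A ^ 2 * ∑ i, ‖x i‖ ^ 2 := by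
  have h := sum_norm_sq_mulVec_le Aᴴ (star x)
  rw [← Matrix.star_vecMul, op2_conjTranspose] at h
  simpa only [Pi.star_apply, norm_star] using h

lemma frob_mul_le_op2_mul (A : Matrix n n ℂ) (B : Matrix n m ℂ) :
    frob (A * B) ≤ op2 A * frob B := by
  refine frob_le_mul_of_sq_le (op2_nonneg A) ?_
  rw [Finset.sum_comm, Finset.sum_comm (f := fun i j => ‖B i j‖ ^ 2), Finset.mul_sum]
  refine Finset.sum_le_sum fun b _ => ?_
  exact sum_norm_sq_mulVec_le A (fun a => B a b)

lemma frob_of_vecMul_le (B : Matrix m n ℂ) (C : m → Matrix n n ℂ) {c : ℝ} (hc : 0 ≤ c)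
    (hC : ∀ i, op2 (C i) ≤ c) :
    frob (Matrix.of fun i => B i ᵥ* C i) ≤ c * frob B := by
  refine frob_le_mul_of_sq_le hc ?_
  rw [Finset.mul_sum]
  refine Finset.sum_le_sum fun i _ => ?_
  calc ∑ j, ‖(B i ᵥ* C i) j‖ ^ 2 ≤ op2 (C i) ^ 2 * ∑ j, ‖B i j‖ ^ 2 :=
        sum_norm_sq_vecMul_le _ _
    _ ≤ c ^ 2 * ∑ j, ‖B i j‖ ^ 2 := by gcongr; exacts [op2_nonneg _, hC i]

end Norms

section Spectral

variable {m n : Type*} [Fintype m] [Fintype n]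

lemma sum_vecMulVec_mul_mul_eq (X Y : Matrix n n ℂ) (V : Matrix n m ℂ) (M : n → Matrix m m ℂ) :
    ∑ h, vecMulVec (fun p => X p h) (fun q => Y h q) * V * M h =
      X * Matrix.of fun h => (Y * V) h ᵥ* M h := by
  ext p b
  simp only [Matrix.sum_apply, Matrix.mul_apply, vecMulVec_apply, Matrix.of_apply, vecMul,
    dotProduct, Finset.mul_sum, Finset.sum_mul, mul_assoc]

variable [DecidableEq m] [DecidableEq n]

theorem frob_sum_vecMulVec_mul_mul_le (X Y : Matrix n n ℂ) (V : Matrix n m ℂ)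
    (M : n → Matrix m m ℂ) :
    frob (∑ h, vecMulVec (fun p => X p h) (fun q => Y h q) * V * M h) ≤
      frob V * op2 X * op2 Y * ⨆ h, op2 (M h) := by
  have hM : ∀ h, op2 (M h) ≤ ⨆ h, op2 (M h) :=
    le_ciSup (Set.finite_range _).bddAbove
  have hM₀ : 0 ≤ ⨆ h, op2 (M h) := Real.iSup_nonneg fun h => op2_nonneg _
  rw [sum_vecMulVec_mul_mul_eq]
  calc _ ≤ op2 X * ((⨆ h, op2 (M h)) * frob (Y * V)) :=
        (frob_mul_le_op2_mul _ _).trans <|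
          mul_le_mul_of_nonneg_left (frob_of_vecMul_le _ _ hM₀ hM) (op2_nonneg X)
    _ ≤ op2 X * ((⨆ h, op2 (M h)) * (op2 Y * frob V)) := by
        gcongr
        · exact op2_nonneg X
        · exact frob_mul_le_op2_mul Y V
    _ = frob V * op2 X * op2 Y * ⨆ h, op2 (M h) := by ring

end Spectral

theorem matfun_error_bound {n s : ℕ}
    (X : Matrix (Fin n) (Fin n) ℂ)
    (Pi : Matrix (Fin n) (Fin n) ℂ) (u : Matrix (Fin n) (Fin s) ℂ) (Γ : Mat s)
    (M : Fin n → Mat s)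
    (Err : Matrix (Fin n) (Fin s) ℂ)
    (herr : Err = ∑ h : Fin n,
      Matrix.vecMulVec (fun p => X p h) (fun q => X⁻¹ h q) * (Pi * u * Γ) * M h) :
    frob Err ≤ (op2 X * op2 X⁻¹) * frob (Pi * u * Γ) * ⨆ h : Fin n, op2 (M h) ∧
    ∀ (V : Matrix (Fin n) (Fin s) ℂ) (Mh : Fin n → Mat s),
      frob (∑ h : Fin n,
          Matrix.vecMulVec (fun p => X p h) (fun q => X⁻¹ h q) * V * Mh h) ≤
        frob V * op2 X * op2 X⁻¹ * ⨆ h : Fin n, op2 (Mh h) := by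
  refine ⟨?_, frob_sum_vecMulVec_mul_mul_le X X⁻¹⟩
  rw [herr]
  exact (frob_sum_vecMulVec_mul_mul_le X X⁻¹ _ M).trans_eq (by ring)
end
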